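/- For every real ε > 0 and all integers 0 ≤ t ≤ k, there exists an integer d = d(ε,k,t) such that for all n ≥ 2k+1, every graph G on n vertices with treewidth at most k contains a set S of at least (1-ε)·(t+1)·n/(k+1) vertices, each of degree at most d in G, such that the induced subgraph G[S] has treewidth at most t. -/

import Mathlib

/-- The degree of a vertex `v` in `G` (number of neighbours). -/
noncomputable def degN {V : Type*} (G : SimpleGraph V) (v : V) : ℕ :=
  (G.neighborSet v).ncard

/-- `G` is a `k`-tree. This encodes the recursive definition (start with a `(k+1)`-clique and
repeatedly add a new vertex adjacent to exactly the vertices of an existing `k`-clique) via a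
construction ordering `e : V ≃ Fin n`: the first `k+1` vertices form a clique, and every later
vertex is adjacent among the earlier vertices to exactly the `k` vertices of a clique `S`. -/
def IsKTree {V : Type*} (k : ℕ) (G : SimpleGraph V) : Prop :=
  ∃ (n : ℕ) (e : V ≃ Fin n),
    k + 1 ≤ n ∧
    (∀ i j : Fin n, i < j → (j : ℕ) < k + 1 → G.Adj (e.symm i) (e.symm j)) ∧
    (∀ j : Fin n, k + 1 ≤ (j : ℕ) →
      ∃ S : Finset (Fin n), S.card = k ∧ (∀ i ∈ S, i < j) ∧
        (∀ i : Fin n, i < j → (G.Adj (e.symm i) (e.symm j) ↔ i ∈ S)) ∧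
        (∀ i ∈ S, ∀ i' ∈ S, i ≠ i' → G.Adj (e.symm i) (e.symm i')))

/-- The treewidth of a graph `G`: the minimum `k` such that `G` is a spanning subgraph
of a `k`-tree. -/
noncomputable def treewidth {V : Type*} (G : SimpleGraph V) : ℕ :=
  sInf {k : ℕ | ∃ H : SimpleGraph V, IsKTree k H ∧ G ≤ H}

/-!
A graph of treewidth `q ≤ k` is a spanning subgraph of a `q`-tree `H`. Ordering the vertices as
`H` was built, the lower neighbours of every vertex form a clique of at most `k` vertices. Hence
`H` has at most `k n` edges, so all but `2 k n / (d + 1) ≤ ε n` vertices have degree at most `d`,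
and greedy colouring along the order colours `H` properly with `k + 1` colours. Some `t + 1`
colour classes contain a `(t + 1) / (k + 1)` fraction of the low-degree vertices. On their union
the order is still a perfect elimination order, now with at most `t` lower neighbours per vertex
(these are coloured differently from each other and from the vertex), and such a graph embeds in
a `t`-tree: attach each vertex to a `t`-clique of earlier vertices containing its lower neighbours.
-/

open Finset

lemma exists_card_eq_mul_sum_le {ι : Type*} [Fintype ι] (f : ι → ℕ) {r : ℕ}
    (hr : r ≤ Fintype.card ι) :
    ∃ C : Finset ι, #C = r ∧ r * ∑ i, f i ≤ Fintype.card ι * ∑ i ∈ C, f i := by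
  classical
  obtain ⟨C, hCmem, hmax⟩ := exists_max_image (univ.powersetCard r) (fun C => ∑ i ∈ C, f i)
    (powersetCard_nonempty.2 (by simpa using hr))
  have hC : #C = r := (mem_powersetCard.1 hCmem).2
  -- no exchange of an element of `C` for an outside one increases the sum
  have hswap : ∀ c ∈ C, ∀ c' ∉ C, f c' ≤ f c := by
    intro c hc c' hc'
    have hc'' : c' ∉ C.erase c := fun h => hc' (mem_of_mem_erase h)
    have hpos : 0 < #C := card_pos.2 ⟨c, hc⟩
    have := hmax (insert c' (C.erase c)) <| mem_powersetCard.2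
      ⟨subset_univ _, by rw [card_insert_of_notMem hc'', card_erase_of_mem hc]; omega⟩
    rw [sum_insert hc'', ← add_sum_erase C f hc] at this
    omega
  have hout : ∀ c' ∈ Cᶜ, r * f c' ≤ ∑ i ∈ C, f i := fun c' hc' => by
    simpa [hC] using card_nsmul_le_sum C f (f c') fun c hc => hswap c hc c' (mem_compl.1 hc')
  refine ⟨C, hC, ?_⟩
  calc r * ∑ i, f i = r * ∑ i ∈ C, f i + ∑ i ∈ Cᶜ, r * f i := by
        rw [← sum_add_sum_compl C, mul_add, mul_sum Cᶜ]
    _ ≤ r * ∑ i ∈ C, f i + #Cᶜ * ∑ i ∈ C, f i := by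
        gcongr; simpa using sum_le_card_nsmul _ _ _ hout
    _ = Fintype.card ι * ∑ i ∈ C, f i := by
        rw [card_compl, hC, ← add_mul, Nat.add_sub_cancel' hr]

lemma one_sub_mul_card_le_card_filter_le {ι : Type*} [Fintype ι] (f : ι → ℕ) {ε : ℝ}
    (hε : 0 ≤ ε) (d : ℕ) (h : (∑ i, f i : ℝ) ≤ ε * d * Fintype.card ι) :
    (1 - ε) * Fintype.card ι ≤ #{i | f i ≤ d} := by
  classical
  have hmarkov : (d + 1) * #{i | ¬ f i ≤ d} ≤ ∑ i, f i := by
    rw [mul_comm, ← smul_eq_mul]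
    exact (card_nsmul_le_sum _ f _ fun i hi => by simp at hi; omega).trans
      (sum_le_sum_of_subset (subset_univ _))
  have hbad : ((d : ℝ) + 1) * #{i | ¬ f i ≤ d} ≤ ((d : ℝ) + 1) * (ε * Fintype.card ι) :=
    calc ((d : ℝ) + 1) * #{i | ¬ f i ≤ d} ≤ ∑ i, (f i : ℝ) := by exact_mod_cast hmarkov
      _ ≤ ε * d * Fintype.card ι := h
      _ ≤ ((d : ℝ) + 1) * (ε * Fintype.card ι) := by
        nlinarith [Nat.cast_nonneg (α := ℝ) (Fintype.card ι)]
  have hsplit : (#{i | f i ≤ d} : ℝ) + #{i | ¬ f i ≤ d} = Fintype.card ι := by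
    exact_mod_cast card_filter_add_card_filter_not (s := univ) (fun i => f i ≤ d)
  nlinarith [le_of_mul_le_mul_left hbad (by positivity)]

section Treewidth

variable {V W : Type*}

lemma IsKTree.comap {k : ℕ} {H : SimpleGraph W} (hH : IsKTree k H) (φ : V ≃ W) :
    IsKTree k (H.comap φ) := by
  obtain ⟨n, e, hn, hinit, hlater⟩ := hH
  refine ⟨n, φ.trans e, hn, by simpa using hinit, fun j hj => ?_⟩
  simpa using hlater j hj

lemma isKTree_top {n : ℕ} (e : V ≃ Fin (n + 1)) : IsKTree n (⊤ : SimpleGraph V) :=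
  ⟨n + 1, e, le_rfl, fun _ _ hij _ => by simpa using hij.ne, fun j hj => by omega⟩

lemma treewidth_le_of_le_of_isKTree {k : ℕ} {G H : SimpleGraph V} (hGH : G ≤ H)
    (hH : IsKTree k H) : treewidth G ≤ k :=
  Nat.sInf_le ⟨H, hH, hGH⟩

lemma treewidth_le_card_sub_one [Fintype V] (G : SimpleGraph V) :
    treewidth G ≤ Fintype.card V - 1 := by
  by_cases h0 : Fintype.card V = 0
  · have : IsEmpty V := Fintype.card_eq_zero_iff.mp h0
    suffices treewidth G = 0 by omega
    refine Nat.sInf_eq_zero.2 (Or.inr (Set.eq_empty_of_forall_notMem ?_))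
    rintro k ⟨H, ⟨n, e, hn, -⟩, -⟩
    exact isEmptyElim (e.symm ⟨0, by omega⟩)
  · obtain ⟨n, hn⟩ := Nat.exists_eq_succ_of_ne_zero h0
    exact (treewidth_le_of_le_of_isKTree le_top
      (isKTree_top (Fintype.equivFinOfCardEq hn))).trans (by omega)

lemma exists_isKTree_treewidth [Fintype V] [Nonempty V] (G : SimpleGraph V) :
    ∃ H, IsKTree (treewidth G) H ∧ G ≤ H := by
  obtain ⟨n, hn⟩ := Nat.exists_eq_succ_of_ne_zero (Fintype.card_ne_zero (α := V))
  exact Nat.sInf_mem (s := {k | ∃ H : SimpleGraph V, IsKTree k H ∧ G ≤ H})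
    ⟨n, ⊤, isKTree_top (Fintype.equivFinOfCardEq hn), le_top⟩

end Treewidth

namespace SimpleGraph

variable {α β : Type*} [LinearOrder α] [LinearOrder β]

/-- The order on `α` is a perfect elimination order of `G`, read from the top: the neighbours
below any vertex form a clique. -/
def IsPerfectEliminationOrder (G : SimpleGraph α) : Prop :=
  ∀ v, G.IsClique {u | u < v ∧ G.Adj u v}

noncomputable def lowerNeighborFinset [Fintype α] (G : SimpleGraph α) (v : α) : Finset α := by
  classical exact {u | u < v ∧ G.Adj u v}

@[simp]
lemma mem_lowerNeighborFinset [Fintype α] {G : SimpleGraph α} {u v : α} :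
    u ∈ G.lowerNeighborFinset v ↔ u < v ∧ G.Adj u v := by
  simp [lowerNeighborFinset]

lemma IsPerfectEliminationOrder.comap {G : SimpleGraph α} (hG : G.IsPerfectEliminationOrder)
    (f : β ↪o α) : (G.comap f).IsPerfectEliminationOrder :=
  fun v _ hu _ hw huw => hG (f v) ⟨f.lt_iff_lt.2 hu.1, hu.2⟩ ⟨f.lt_iff_lt.2 hw.1, hw.2⟩
    (f.injective.ne huw)

lemma card_lowerNeighborFinset_comap_le [Fintype α] [Fintype β] (G : SimpleGraph α)
    (f : β ↪o α) (v : β) :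
    #((G.comap f).lowerNeighborFinset v) ≤ #(G.lowerNeighborFinset (f v)) :=
  card_le_card_of_injOn f
    (fun u hu => by
      simp only [mem_coe, mem_lowerNeighborFinset, comap_adj] at hu ⊢
      exact ⟨f.lt_iff_lt.2 hu.1, hu.2⟩)
    f.injective.injOn

lemma colorable_of_card_lowerNeighborFinset_le [Fintype α] {G : SimpleGraph α} {k : ℕ}
    (h : ∀ v, #(G.lowerNeighborFinset v) ≤ k) : G.Colorable (k + 1) := by
  classical
  suffices ∀ s : Finset α,
      ∃ c : α → Fin (k + 1), ∀ u ∈ s, ∀ v ∈ s, G.Adj u v → c u ≠ c v by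
    obtain ⟨c, hc⟩ := this univ
    exact ⟨Coloring.mk c fun huv => hc _ (mem_univ _) _ (mem_univ _) huv⟩
  intro s
  induction s using Finset.induction_on_max with
  | empty => exact ⟨fun _ => 0, by simp⟩
  | insert a s hlt ih =>
    obtain ⟨c, hc⟩ := ih
    obtain ⟨col, -, hcol⟩ := exists_mem_notMem_of_card_lt_card
      (s := (G.lowerNeighborFinset a).image c) (t := univ)
      (by simpa using card_image_le.trans_lt (Nat.lt_succ_of_le (h a)))
    have hfresh : ∀ u ∈ s, G.Adj u a → col ≠ c u := fun u hu hua heq =>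
      hcol (mem_image.2 ⟨u, mem_lowerNeighborFinset.2 ⟨hlt u hu, hua⟩, heq.symm⟩)
    have hne : ∀ u ∈ s, u ≠ a := fun u hu => (hlt u hu).ne
    refine ⟨Function.update c a col, ?_⟩
    simp only [mem_insert]
    rintro u (rfl | hu) v (rfl | hv) huv
    · exact absurd huv G.irrefl
    · simpa [hne v hv] using hfresh v hv huv.symm
    · simpa [hne u hu] using (hfresh u hu huv).symm
    · simpa [hne u hu, hne v hv] using hc u hu v hv huv

lemma IsPerfectEliminationOrder.card_lowerNeighborFinset_lt [Fintype α] {G : SimpleGraph α}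
    (hG : G.IsPerfectEliminationOrder) {γ : Type*} [Fintype γ] (C : G.Coloring γ) (v : α) :
    #(G.lowerNeighborFinset v) < Fintype.card γ := by
  have hv : v ∉ G.lowerNeighborFinset v := fun h => (mem_lowerNeighborFinset.1 h).1.false
  have hclique : G.IsClique (insert v (G.lowerNeighborFinset v) : Finset α) := by
    rw [coe_insert, isClique_insert]
    exact ⟨fun u hu w hw huw => hG v (by simpa using hu) (by simpa using hw) huw,
      fun u hu _ => (mem_lowerNeighborFinset.1 hu).2.symm⟩
  simpa [card_insert_of_notMem hv] using hclique.card_le_of_coloring C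

lemma sum_degN_le_of_le [Fintype α] {G H : SimpleGraph α} {k : ℕ}
    (hGH : G ≤ H) (hk : ∀ v, #(H.lowerNeighborFinset v) ≤ k) :
    ∑ v, degN G v ≤ 2 * k * Fintype.card α := by
  classical
  let r : α → α → Prop := fun u w => u < w ∧ H.Adj u w
  have hdeg : ∀ v, degN G v ≤ #(H.lowerNeighborFinset v) + #(univ.bipartiteAbove r v) := by
    intro v
    refine (Set.ncard_le_ncard (t := ↑(H.lowerNeighborFinset v ∪ univ.bipartiteAbove r v))
      (fun w hw => ?_)).trans ?_
    · have hvw : H.Adj v w := hGH hw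
      rcases hvw.ne.lt_or_gt with h | h
      · exact mem_union_right _ (by simp [r, bipartiteAbove, h, hvw])
      · exact mem_union_left _ (mem_lowerNeighborFinset.2 ⟨h, hvw.symm⟩)
    · rw [Set.ncard_coe_finset]; exact card_union_le _ _
  have hbelow : ∀ w, univ.bipartiteBelow r w = H.lowerNeighborFinset w := fun w => by
    ext u; simp [r, bipartiteBelow]
  calc ∑ v, degN G v
      ≤ ∑ v, #(H.lowerNeighborFinset v) + ∑ v, #(univ.bipartiteAbove r v) := by
        rw [← sum_add_distrib]; exact sum_le_sum fun v _ => hdeg v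
    _ = 2 * ∑ v, #(H.lowerNeighborFinset v) := by
        rw [sum_card_bipartiteAbove_eq_sum_card_bipartiteBelow]; simp only [hbelow]; ring
    _ ≤ 2 * ∑ _v : α, k := by gcongr with v; exact hk v
    _ = 2 * k * Fintype.card α := by simp; ring

section Completion

variable {m t : ℕ}

/-- `K` is a clique of the graph in which `u < w` are adjacent iff `u ∈ A w`. -/
def IsParentClique (A : Fin m → Finset (Fin m)) (K : Finset (Fin m)) : Prop :=
  ∀ u ∈ K, ∀ w ∈ K, u < w → u ∈ A w

/-- `A j` can be the set of earlier neighbours of `j` in a `t`-tree containing `G` built along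
`Fin m`; for `j ≤ t` this forces `A j = Iio j`, the initial clique. -/
def IsParentSet (t : ℕ) (G : SimpleGraph (Fin m)) (A : Fin m → Finset (Fin m)) (j : Fin m) :
    Prop :=
  A j ⊆ Iio j ∧ #(A j) = min (j : ℕ) t ∧ G.lowerNeighborFinset j ⊆ A j ∧
    IsParentClique A (A j)

variable {G : SimpleGraph (Fin m)} {A A' : Fin m → Finset (Fin m)} {K : Finset (Fin m)}
  {j : Fin m}

lemma IsParentClique.mono {K' : Finset (Fin m)} (h : IsParentClique A K) (hK : K' ⊆ K) :
    IsParentClique A K' :=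
  fun u hu w hw huw => h u (hK hu) w (hK hw) huw

lemma IsParentClique.congr (h : IsParentClique A K) (hA : ∀ w ∈ K, A' w = A w) :
    IsParentClique A' K :=
  fun u hu w hw huw => hA w hw ▸ h u hu w hw huw

lemma IsParentSet.congr (h : IsParentSet t G A j) (hA : ∀ w ≤ j, A' w = A w) :
    IsParentSet t G A' j := by
  obtain ⟨hlt, hcard, hlow, hcl⟩ := h
  rw [← hA j le_rfl] at hlt hcard hlow hcl
  exact ⟨hlt, hcard, hlow, hcl.congr fun w hw => hA w (mem_Iio.1 (hlt hw)).le⟩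

lemma IsParentSet.eq_Iio (h : IsParentSet t G A j) (hj : (j : ℕ) ≤ t) : A j = Iio j :=
  eq_of_subset_of_card_le h.1 (by rw [Fin.card_Iio, h.2.1]; omega)

/-- If some lower neighbour of `j` is at least `t`, the largest one `w` together with `A w` is a
`(t + 1)`-clique containing all of them; otherwise the first `min j t` vertices form such a clique.
-/
lemma exists_isParentClique_superset (hG : G.IsPerfectEliminationOrder)
    (hA : ∀ i < j, IsParentSet t G A i) :
    ∃ K ⊆ Iio j, min (j : ℕ) t ≤ #K ∧ G.lowerNeighborFinset j ⊆ K ∧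
      IsParentClique A K := by
  set C := G.lowerNeighborFinset j
  have hCj : ∀ c ∈ C, c < j := fun c hc => (mem_lowerNeighborFinset.1 hc).1
  have hC : IsParentClique A C := fun u hu w hw huw =>
    (hA w (hCj w hw)).2.2.1 <| mem_lowerNeighborFinset.2
      ⟨huw, hG j (mem_lowerNeighborFinset.1 hu) (mem_lowerNeighborFinset.1 hw) huw.ne⟩
  by_cases hbig : ∃ w ∈ C, t ≤ (w : ℕ)
  · obtain ⟨w₀, hw₀C, hw₀⟩ := hbig
    set w := C.max' ⟨w₀, hw₀C⟩
    have hwC : w ∈ C := C.max'_mem _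
    have htw : t ≤ (w : ℕ) := hw₀.trans (C.le_max' w₀ hw₀C)
    obtain ⟨hAw, hcard, -, hcl⟩ := hA w (hCj w hwC)
    have hwA : w ∉ A w := fun h => (mem_Iio.1 (hAw h)).false
    refine ⟨insert w (A w), ?_, ?_, ?_, ?_⟩
    · refine insert_subset (mem_Iio.2 (hCj w hwC)) fun u hu => ?_
      exact mem_Iio.2 ((mem_Iio.1 (hAw hu)).trans (hCj w hwC))
    · rw [card_insert_of_notMem hwA, hcard]; omega
    · intro c hc
      rcases (C.le_max' c hc).lt_or_eq with hcw | hcw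
      · exact mem_insert_of_mem (hC c hc w hwC hcw)
      · exact hcw ▸ mem_insert_self _ _
    · intro u hu u' hu' huu'
      rcases mem_insert.1 hu' with rfl | hu'
      · exact (mem_insert.1 hu).resolve_left huu'.ne
      · rcases mem_insert.1 hu with rfl | hu
        · exact absurd ((mem_Iio.1 (hAw hu')).trans huu') (lt_irrefl _)
        · exact hcl u hu u' hu' huu'
  · push Not at hbig
    have hmin : min (j : ℕ) t < m := (min_le_left _ _).trans_lt j.isLt
    refine ⟨Iio ⟨min (j : ℕ) t, hmin⟩, fun u hu => ?_, by simp, fun c hc => ?_, ?_⟩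
    · simp only [mem_Iio, Fin.lt_def] at hu ⊢; omega
    · have := hCj c hc; have := hbig c hc
      simp only [mem_Iio, Fin.lt_def] at this ⊢; omega
    · intro u _ w hw huw
      simp only [mem_Iio, Fin.lt_def] at hw
      rw [(hA w (by rw [Fin.lt_def]; omega)).eq_Iio (by omega)]
      exact mem_Iio.2 huw

lemma exists_isParentSet_update (hG : G.IsPerfectEliminationOrder)
    (hcard : ∀ j, #(G.lowerNeighborFinset j) ≤ t) (hA : ∀ i < j, IsParentSet t G A i) :
    ∃ T, ∀ i ≤ j, IsParentSet t G (Function.update A j T) i := by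
  obtain ⟨K, hKj, hKcard, hCK, hK⟩ := exists_isParentClique_superset hG hA
  have hCcard : #(G.lowerNeighborFinset j) ≤ min (j : ℕ) t := by
    refine le_min ?_ (hcard j)
    simpa using card_le_card fun u hu => hKj (hCK hu)
  obtain ⟨T, hCT, hTK, hTcard⟩ := exists_subsuperset_card_eq hCK hCcard hKcard
  have hupd : ∀ w < j, Function.update A j T w = A w := fun w hw =>
    Function.update_of_ne hw.ne _ _
  refine ⟨T, fun i hi => ?_⟩
  rcases hi.lt_or_eq with hi | rfl
  · exact (hA i hi).congr fun w hw => hupd w (hw.trans_lt hi)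
  · simp only [IsParentSet, Function.update_self]
    exact ⟨hTK.trans hKj, hTcard, hCT,
      (hK.mono hTK).congr fun w hw => hupd w (mem_Iio.1 (hKj (hTK hw)))⟩

lemma exists_isParentSet (hG : G.IsPerfectEliminationOrder)
    (hcard : ∀ j, #(G.lowerNeighborFinset j) ≤ t) : ∃ A, ∀ j, IsParentSet t G A j := by
  suffices ∀ n, ∃ A, ∀ j : Fin m, (j : ℕ) < n → IsParentSet t G A j by
    obtain ⟨A, hA⟩ := this m
    exact ⟨A, fun j => hA j j.isLt⟩
  intro n
  induction n with
  | zero => exact ⟨fun _ => ∅, fun j hj => absurd hj (Nat.not_lt_zero _)⟩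
  | succ n ih =>
    obtain ⟨A, hA⟩ := ih
    by_cases hn : n < m
    · obtain ⟨T, hT⟩ := exists_isParentSet_update (j := ⟨n, hn⟩) hG hcard
        fun i hi => hA i (Fin.lt_def.1 hi)
      exact ⟨_, fun i hi => hT i (Fin.le_def.2 (Nat.lt_succ_iff.1 hi))⟩
    · exact ⟨A, fun j _ => hA j (by omega)⟩

lemma isKTree_fromRel_of_isParentSet (hA : ∀ j, IsParentSet t G A j) (hm : t + 1 ≤ m) :
    IsKTree t (fromRel fun u w => u ∈ A w) := by
  have hlt : ∀ {u w}, u ∈ A w → u < w := fun h => mem_Iio.1 ((hA _).1 h)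
  refine ⟨m, Equiv.refl _, hm, fun i j hij hj => ?_, fun j hj => ?_⟩
  · simp only [Equiv.refl_symm, Equiv.refl_apply, fromRel_adj]
    exact ⟨hij.ne, Or.inl (((hA j).eq_Iio (by omega)) ▸ mem_Iio.2 hij)⟩
  · obtain ⟨hAj, hcard, -, hcl⟩ := hA j
    refine ⟨A j, by rw [hcard]; omega, fun i hi => mem_Iio.1 (hAj hi), fun i hij => ?_,
      fun i hi i' hi' hii' => ?_⟩
    · simp only [Equiv.refl_symm, Equiv.refl_apply, fromRel_adj]
      exact ⟨fun h => h.2.resolve_right fun hji => (hlt hji).asymm hij,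
        fun h => ⟨hij.ne, .inl h⟩⟩
    · simp only [Equiv.refl_symm, Equiv.refl_apply, fromRel_adj]
      rcases hii'.lt_or_gt with h | h
      · exact ⟨hii', .inl (hcl i hi i' hi' h)⟩
      · exact ⟨hii', .inr (hcl i' hi' i hi h)⟩

lemma le_fromRel_of_isParentSet (hA : ∀ j, IsParentSet t G A j) :
    G ≤ fromRel fun u w => u ∈ A w := by
  intro u w huw
  refine (fromRel_adj _ _ _).2 ⟨huw.ne, ?_⟩
  rcases huw.ne.lt_or_gt with h | h
  · exact .inl ((hA w).2.2.1 (mem_lowerNeighborFinset.2 ⟨h, huw⟩))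
  · exact .inr ((hA u).2.2.1 (mem_lowerNeighborFinset.2 ⟨h, huw.symm⟩))

end Completion

lemma exists_isKTree_le [Fintype α] {t : ℕ} {G : SimpleGraph α}
    (hG : G.IsPerfectEliminationOrder)
    (hcard : ∀ v, #(G.lowerNeighborFinset v) ≤ t) (hα : t + 1 ≤ Fintype.card α) :
    ∃ K, IsKTree t K ∧ G ≤ K := by
  let e : Fin (Fintype.card α) ≃o α := Fintype.orderIsoFinOfCardEq α rfl
  obtain ⟨A, hA⟩ := exists_isParentSet (hG.comap e.toOrderEmbedding)
    fun j => (card_lowerNeighborFinset_comap_le G _ j).trans (hcard _)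
  refine ⟨(fromRel fun u w => u ∈ A w).comap e.symm,
    (isKTree_fromRel_of_isParentSet hA hα).comap e.symm.toEquiv,
    fun u w huw => le_fromRel_of_isParentSet hA ?_⟩
  simpa using huw

lemma treewidth_le_of_le_of_isPerfectEliminationOrder [Fintype α] {t : ℕ} {G H : SimpleGraph α}
    (hGH : G ≤ H) (hH : H.IsPerfectEliminationOrder)
    (hcard : ∀ v, #(H.lowerNeighborFinset v) ≤ t) :
    treewidth G ≤ t := by
  by_cases hα : t + 1 ≤ Fintype.card α
  · obtain ⟨K, hK, hHK⟩ := exists_isKTree_le hH hcard hα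
    exact treewidth_le_of_le_of_isKTree (hGH.trans hHK) hK
  · exact (treewidth_le_card_sub_one G).trans (by omega)

lemma exists_subset_treewidth_induce_le [Fintype α] {G H : SimpleGraph α} {k t : ℕ}
    (hGH : G ≤ H) (hH : H.IsPerfectEliminationOrder)
    (hk : ∀ v, #(H.lowerNeighborFinset v) ≤ k) (htk : t ≤ k)
    (U : Finset α) :
    ∃ S ⊆ U, treewidth (G.induce (S : Set α)) ≤ t ∧ (t + 1) * #U ≤ (k + 1) * #S := by
  classical
  obtain ⟨c⟩ := colorable_of_card_lowerNeighborFinset_le hk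
  obtain ⟨Cs, hCs, hsum⟩ := exists_card_eq_mul_sum_le (fun col => #{v ∈ U | c v = col})
    (r := t + 1) (by simpa using htk)
  set S := U.filter (c · ∈ Cs)
  refine ⟨S, filter_subset _ _, ?_, ?_⟩
  · let cS : (H.induce (S : Set α)).Coloring Cs :=
      Coloring.mk (fun v => ⟨c v, (mem_filter.1 v.2).2⟩)
        fun h heq => c.valid h (congrArg Subtype.val heq)
    have hind : (H.induce (S : Set α)).IsPerfectEliminationOrder :=
      hH.comap (OrderEmbedding.subtype (· ∈ (S : Set α)))
    refine treewidth_le_of_le_of_isPerfectEliminationOrder (fun _ _ h => hGH h) hind fun v => ?_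
    simpa [hCs, Nat.lt_succ_iff] using hind.card_lowerNeighborFinset_lt cS v
  · have hU : #U = ∑ col, #{v ∈ U | c v = col} :=
      card_eq_sum_card_fiberwise fun v _ => mem_coe.2 (mem_univ (c v))
    have hS : #S = ∑ col ∈ Cs, #{v ∈ U | c v = col} := by
      rw [card_eq_sum_card_fiberwise fun v hv => mem_coe.2 (mem_filter.1 hv).2]
      refine sum_congr rfl fun col hcol => ?_
      rw [filter_filter]
      exact congrArg card (filter_congr fun v _ => ⟨And.right, fun h => ⟨h ▸ hcol, h⟩⟩)
    simpa [hU, hS] using hsum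

end SimpleGraph

open SimpleGraph in
lemma IsKTree.exists_isPerfectEliminationOrder {V : Type*} [Fintype V] {k : ℕ}
    {H : SimpleGraph V} (hH : IsKTree k H) :
    ∃ _ : LinearOrder V,
      H.IsPerfectEliminationOrder ∧ ∀ v, #(H.lowerNeighborFinset v) ≤ k := by
  obtain ⟨n, e, -, hinit, hlater⟩ := hH
  let _ : LinearOrder V := LinearOrder.lift' e e.injective
  have hclique : ∀ v, ∃ S : Finset (Fin n), #S ≤ k ∧
      (∀ u, e u < e v → H.Adj u v → e u ∈ S) ∧
      ∀ i ∈ S, ∀ i' ∈ S, i ≠ i' → H.Adj (e.symm i) (e.symm i') := by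
    intro v
    by_cases hv : (e v : ℕ) < k + 1
    · refine ⟨Iio (e v), by simp; omega, fun u hu _ => mem_Iio.2 hu,
        fun i hi i' hi' hii' => ?_⟩
      rw [mem_Iio] at hi hi'
      rcases hii'.lt_or_gt with h | h
      · exact hinit i i' h (by omega)
      · exact (hinit i' i h (by omega)).symm
    · obtain ⟨S, hS, -, hadj, hS'⟩ := hlater (e v) (by omega)
      exact ⟨S, hS.le, fun u hu huv => (hadj (e u) hu).1 (by simpa using huv), hS'⟩
  refine ⟨‹_›, fun v u hu w hw huw => ?_, fun v => ?_⟩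
  · obtain ⟨S, -, hmem, hS⟩ := hclique v
    simpa using hS _ (hmem u hu.1 hu.2) _ (hmem w hw.1 hw.2) (e.injective.ne huw)
  · obtain ⟨S, hSk, hmem, -⟩ := hclique v
    refine (card_le_card_of_injOn e (fun u hu => ?_) e.injective.injOn).trans hSk
    rw [mem_coe, mem_lowerNeighborFinset] at hu
    exact hmem u hu.1 hu.2

/-- For every real `ε > 0` and all integers `0 ≤ t ≤ k`, there exists an
integer `d` such that for all `n ≥ 2k+1`, every graph `G` on `n` vertices with treewidth at
most `k` contains a set `S` of at least `(1-ε)·(t+1)·n/(k+1)` vertices, each of degree at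
most `d` in `G`, whose induced subgraph has treewidth at most `t`. -/
theorem stmt10 (ε : ℝ) (hε : 0 < ε) (t k : ℕ) (htk : t ≤ k) :
    ∃ d : ℕ, ∀ (V : Type) (_ : Fintype V) (G : SimpleGraph V),
      2 * k + 1 ≤ Fintype.card V → treewidth G ≤ k →
      ∃ S : Finset V,
        (∀ v ∈ S, degN G v ≤ d) ∧
        treewidth (G.induce (S : Set V)) ≤ t ∧
        (1 - ε) * ((t + 1 : ℝ) * Fintype.card V / (k + 1)) ≤ S.card := by
  classical
  refine ⟨⌈2 * k / ε⌉₊, fun V _ G hcard htw => ?_⟩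
  set d := ⌈2 * k / ε⌉₊
  have : Nonempty V := Fintype.card_pos_iff.1 (by omega)
  obtain ⟨H, hH, hGH⟩ := exists_isKTree_treewidth G
  obtain ⟨_, hPEO, hlow⟩ := hH.exists_isPerfectEliminationOrder
  have hk : ∀ v, #(H.lowerNeighborFinset v) ≤ k := fun v => (hlow v).trans htw
  obtain ⟨S, hSU, htwS, hS⟩ :=
    SimpleGraph.exists_subset_treewidth_induce_le hGH hPEO hk htk {v | degN G v ≤ d}
  refine ⟨S, fun v hv => (mem_filter.1 (hSU hv)).2, htwS, ?_⟩
  have hεd : 2 * k ≤ ε * d := by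
    have := (div_le_iff₀ hε).1 (Nat.le_ceil (2 * k / ε))
    linarith
  have hgood : (1 - ε) * Fintype.card V ≤ #{v | degN G v ≤ d} := by
    refine one_sub_mul_card_le_card_filter_le _ hε.le d ?_
    calc (∑ v, degN G v : ℝ) ≤ 2 * k * Fintype.card V := by
          exact_mod_cast SimpleGraph.sum_degN_le_of_le hGH hk
      _ ≤ ε * d * Fintype.card V := by gcongr
  have hS' : ((t : ℝ) + 1) * #{v | degN G v ≤ d} ≤ ((k : ℝ) + 1) * #S := by
    exact_mod_cast hS
  calc (1 - ε) * ((t + 1 : ℝ) * Fintype.card V / (k + 1))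
      = (t + 1) * ((1 - ε) * Fintype.card V) / (k + 1) := by ring
    _ ≤ (t + 1) * #{v | degN G v ≤ d} / (k + 1) := by gcongr
    _ ≤ #S := by rw [div_le_iff₀ (by positivity)]; linarith
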